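/- arXiv:2005.02223 — 7 statements merged into one kernel-verified Lean document; each statement's English description precedes it below -/
import Mathlib

section
/- If D is an n×2 matrix with nonnegative integer entries, no zero rows, satisfying Dᵀ·D = [[5,1],[1,2]], then either n = 6 and (up to permutation of rows) D has rows (1,0),(1,0),(1,0),(1,0),(1,1),(0,1), or n = 3 and (up to permutation of rows) D has rows (2,0),(1,1),(0,1). -/
open Matrix

private def vr : Fin 4 → Fin 2 → ℕ := ![![1,0], ![2,0], ![0,1], ![1,1]]
private def cA : Fin 6 → Fin 4 := ![0, 0, 0, 0, 3, 2]
private def cB : Fin 3 → Fin 4 := ![1, 3, 2]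

/-- If `D` is an `n × 2` matrix with nonnegative integer entries, no zero rows, and
`Dᵀ * D = [[5,1],[1,2]]`, then either `n = 6` and up to permutation of rows `D` has rows
`(1,0),(1,0),(1,0),(1,0),(1,1),(0,1)`, or `n = 3` and up to permutation of rows `D` has
rows `(2,0),(1,1),(0,1)`. -/
theorem stmt_1 (n : ℕ) (D : Matrix (Fin n) (Fin 2) ℕ)
    (hrow : ∀ m : Fin n, D m ≠ 0)
    (hC : D.transpose * D = !![5, 1; 1, 2]) :
    (n = 6 ∧ ∃ σ : Fin n ≃ Fin 6,
      ∀ m : Fin n, D m = ![![1,0], ![1,0], ![1,0], ![1,0], ![1,1], ![0,1]] (σ m)) ∨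
    (n = 3 ∧ ∃ σ : Fin n ≃ Fin 3,
      ∀ m : Fin n, D m = ![![2,0], ![1,1], ![0,1]] (σ m)) := by
  classical
  have h00 := congrFun (congrFun hC 0) 0
  have h01 := congrFun (congrFun hC 0) 1
  have h11 := congrFun (congrFun hC 1) 1
  simp [Matrix.mul_apply] at h00 h01 h11
  have hex : ∀ m, ∃ i : Fin 4, D m = vr i := by
    intro m
    have hb2 : D m 1 * D m 1 ≤ 2 :=
      le_of_le_of_eq (Finset.single_le_sum (f := fun m => D m 1 * D m 1)
        (fun i _ => Nat.zero_le _) (Finset.mem_univ m)) h11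
    have ha2 : D m 0 * D m 0 ≤ 5 :=
      le_of_le_of_eq (Finset.single_le_sum (f := fun m => D m 0 * D m 0)
        (fun i _ => Nat.zero_le _) (Finset.mem_univ m)) h00
    have hab : D m 0 * D m 1 ≤ 1 :=
      le_of_le_of_eq (Finset.single_le_sum (f := fun m => D m 0 * D m 1)
        (fun i _ => Nat.zero_le _) (Finset.mem_univ m)) h01
    have hb : D m 1 ≤ 1 := by nlinarith
    have ha : D m 0 ≤ 2 := by nlinarith
    have hnz : D m 0 ≠ 0 ∨ D m 1 ≠ 0 := by
      by_contra h
      push_neg at h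
      exact hrow m (funext fun j => by fin_cases j <;> simp [h.1, h.2])
    have hD : D m = ![D m 0, D m 1] := by
      funext j; fin_cases j <;> rfl
    have hacase : D m 0 = 0 ∨ D m 0 = 1 ∨ D m 0 = 2 := by omega
    have hbcase : D m 1 = 0 ∨ D m 1 = 1 := by omega
    rcases hacase with h0 | h0 | h0 <;> rcases hbcase with h1 | h1
    · exfalso; rcases hnz with h | h
      · exact h h0
      · exact h h1
    · refine ⟨2, ?_⟩; rw [hD, h0, h1]; decide
    · refine ⟨0, ?_⟩; rw [hD, h0, h1]; decide
    · refine ⟨3, ?_⟩; rw [hD, h0, h1]; decide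
    · refine ⟨1, ?_⟩; rw [hD, h0, h1]; decide
    · exfalso; rw [h0, h1] at hab; omega
  choose c hc using hex
  set k : Fin 4 → ℕ := fun i => (Finset.univ.filter fun m => c m = i).card with hk
  have key : ∀ f : Fin 4 → ℕ, ∑ m : Fin n, f (c m) = ∑ t : Fin 4, k t * f t := by
    intro f
    rw [← Finset.sum_fiberwise_of_maps_to' (fun i _ => Finset.mem_univ (c i)) f]
    exact Finset.sum_congr rfl fun t _ => by
      rw [Finset.sum_const, smul_eq_mul]
  simp only [hc] at h00 h01 h11
  have e1 : k 0 * (1 * 1) + k 1 * (2 * 2) + k 2 * (0 * 0) + k 3 * (1 * 1) = 5 := by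
    have h := (key fun t => vr t 0 * vr t 0).symm.trans h00
    rw [Fin.sum_univ_four] at h
    exact h
  have e2 : k 0 * (1 * 0) + k 1 * (2 * 0) + k 2 * (0 * 1) + k 3 * (1 * 1) = 1 := by
    have h := (key fun t => vr t 0 * vr t 1).symm.trans h01
    rw [Fin.sum_univ_four] at h
    exact h
  have e3 : k 0 * (0 * 0) + k 1 * (0 * 0) + k 2 * (1 * 1) + k 3 * (1 * 1) = 2 := by
    have h := (key fun t => vr t 1 * vr t 1).symm.trans h11
    rw [Fin.sum_univ_four] at h
    exact h
  have en : k 0 * 1 + k 1 * 1 + k 2 * 1 + k 3 * 1 = n := by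
    have h := (key fun _ => 1).symm.trans (by simp : ∑ _m : Fin n, (1:ℕ) = n)
    rw [Fin.sum_univ_four] at h
    exact h
  have hcase : (k 0 = 4 ∧ k 1 = 0 ∧ k 2 = 1 ∧ k 3 = 1 ∧ n = 6) ∨
      (k 0 = 0 ∧ k 1 = 1 ∧ k 2 = 1 ∧ k 3 = 1 ∧ n = 3) := by omega
  rcases hcase with ⟨h0, h1, h2, h3, hn⟩ | ⟨h0, h1, h2, h3, hn⟩
  · left
    subst hn
    refine ⟨rfl, ?_⟩
    have hfib : ∀ i, Fintype.card {m : Fin 6 // c m = i} =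
        Fintype.card {j : Fin 6 // cA j = i} := by
      intro i
      rw [Fintype.card_subtype]
      fin_cases i
      · exact h0.trans (by decide)
      · exact h1.trans (by decide)
      · exact h2.trans (by decide)
      · exact h3.trans (by decide)
    set σ : Fin 6 ≃ Fin 6 :=
      Equiv.ofFiberEquiv (f := c) (g := cA)
        (fun i => Fintype.equivOfCardEq (hfib i)) with hσ
    have hmap : ∀ m, cA (σ m) = c m := fun m => Equiv.ofFiberEquiv_map _ m
    refine ⟨σ, fun m => ?_⟩
    have hgv : ∀ j : Fin 6,
        ![![1,0], ![1,0], ![1,0], ![1,0], ![1,1], ![0,1]] j = vr (cA j) := by decide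
    rw [hc m, hgv (σ m), hmap m]
  · right
    subst hn
    refine ⟨rfl, ?_⟩
    have hfib : ∀ i, Fintype.card {m : Fin 3 // c m = i} =
        Fintype.card {j : Fin 3 // cB j = i} := by
      intro i
      rw [Fintype.card_subtype]
      fin_cases i
      · exact h0.trans (by decide)
      · exact h1.trans (by decide)
      · exact h2.trans (by decide)
      · exact h3.trans (by decide)
    set σ : Fin 3 ≃ Fin 3 :=
      Equiv.ofFiberEquiv (f := c) (g := cB)
        (fun i => Fintype.equivOfCardEq (hfib i)) with hσ
    have hmap : ∀ m, cB (σ m) = c m := fun m => Equiv.ofFiberEquiv_map _ m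
    refine ⟨σ, fun m => ?_⟩
    have hgv : ∀ j : Fin 3, ![![2,0], ![1,1], ![0,1]] j = vr (cB j) := by decide
    rw [hc m, hgv (σ m), hmap m]
end

section
/- In a finite-dimensional split local symmetric algebra R over a field, the second socle soc²(R) = {r ∈ R : J(R)²·r = 0} is contained in the center Z(R). -/
/-- In a finite-dimensional split local symmetric algebra `R` over a field `k`
(local, with residue field `k`, and carrying a symmetrising form `s`), every element
of the second socle `soc²(R) = {r | J(R)² · r = 0}` is central. -/
theorem stmt_2 (k R : Type*) [Field k] [Ring R] [Algebra k R] [FiniteDimensional k R]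
    [IsLocalRing R]
    (hsplit : ∀ r : R, ∃ c : k, r - algebraMap k R c ∈ (⊥ : Ideal R).jacobson)
    (s : R →ₗ[k] k)
    (hsymm : ∀ a b : R, s (a * b) = s (b * a))
    (hfaith : ∀ I : Ideal R, (∀ x ∈ I, s x = 0) → I = ⊥)
    (r : R)
    (hr : ∀ x ∈ (⊥ : Ideal R).jacobson, ∀ y ∈ (⊥ : Ideal R).jacobson, x * y * r = 0) :
    ∀ a : R, a * r = r * a := by
  intro a
  set c : R := a * r - r * a with hc
  -- Key step: s (x * c) = 0 for all x
  have key : ∀ x : R, s (x * c) = 0 := by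
    intro x
    obtain ⟨d, hd⟩ := hsplit a
    obtain ⟨e, he⟩ := hsplit x
    set u : R := algebraMap k R e with hu
    set v : R := algebraMap k R d with hv
    have hua : u * a = a * u := Algebra.commutes e a
    have hvx : v * x = x * v := Algebra.commutes d x
    have huv : u * v = v * u := Algebra.commutes e v
    have hcomm : (x - u) * (a - v) - (a - v) * (x - u) = x * a - a * x := by
      simp only [sub_mul, mul_sub]
      rw [hua, hvx, huv]
      abel
    have hzero : (x * a - a * x) * r = 0 := by
      rw [← hcomm, sub_mul, hr _ he _ hd, hr _ hd _ he, sub_zero]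
    have e1 : x * c = x * a * r - x * (r * a) := by rw [hc, mul_sub, ← mul_assoc]
    have e2 : s (x * (r * a)) = s (a * x * r) := by
      rw [hsymm x (r * a), mul_assoc r a x, hsymm r (a * x), mul_assoc]
    rw [e1, map_sub, e2, ← map_sub, ← sub_mul, hzero, map_zero]
  -- The left ideal generated by c is killed by s, hence zero
  have hspan : Ideal.span {c} = ⊥ := by
    apply hfaith
    intro y hy
    rw [Ideal.span, Submodule.mem_span_singleton] at hy
    obtain ⟨z, hz⟩ := hy
    rw [← hz, smul_eq_mul]
    exact key z
  have : c ∈ (⊥ : Ideal R) := hspan ▸ Ideal.subset_span rfl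
  rw [Ideal.mem_bot] at this
  exact sub_eq_zero.mp this
end

section
/- Every split local symmetric k-algebra of dimension 5 over an algebraically closed field k is commutative. -/
/-!
Let `M` be the Jacobson radical, viewed as a `k`-subspace. It is nilpotent and `R = k ⊕ M`,
so `dim M = 4` and the dimensions of the powers `M ^ n` drop strictly until they reach `0`.
Since `s` is nondegenerate and kills commutators, `[a, b] = 0` as soon as `s ([a, b] r) = 0`
for all `r ∈ M`. If `dim M ^ 2 ≤ 1`, then `M ^ 3 = 0` and this is automatic. If
`dim M ^ 2 = 2`, then `M ^ 4 = 0` and `M / M ^ 2` is a plane: either `[a, b] ∈ M ^ 3`, or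
`r ∈ k a + k b + M ^ 2`, and then `s ([a, b] a) = s ([a, b] b) = 0` by the symmetry of `s`.
If `dim M ^ 2 = 3`, then `M` is generated by one element `x` modulo `M ^ 2`, hence `R = k[x]`.
-/

open Module Submodule

section SymmetrisingForm

variable {k R : Type*} [Field k] [Ring R] [Algebra k R] {s : R →ₗ[k] k}

theorem eq_zero_of_forall_map_mul_eq_zero (hsymm : ∀ a b : R, s (a * b) = s (b * a))
    (hfaith : ∀ I : Ideal R, (∀ x ∈ I, s x = 0) → I = ⊥) {x : R}
    (hx : ∀ r, s (x * r) = 0) : x = 0 := by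
  have hspan : Ideal.span {x} = ⊥ := hfaith _ fun y hy => by
    obtain ⟨r, rfl⟩ := Ideal.mem_span_singleton'.mp hy
    rw [hsymm]
    exact hx r
  simpa [hspan] using Ideal.subset_span (Set.mem_singleton x)

theorem map_commutator_mul_left_eq_zero (hsymm : ∀ a b : R, s (a * b) = s (b * a)) (a b : R) :
    s ((a * b - b * a) * a) = 0 := by
  rw [sub_mul, map_sub, mul_assoc, hsymm a, sub_self]

theorem map_commutator_mul_right_eq_zero (hsymm : ∀ a b : R, s (a * b) = s (b * a)) (a b : R) :
    s ((a * b - b * a) * b) = 0 := by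
  rw [sub_mul, map_sub, mul_assoc b, hsymm b, sub_self]

end SymmetrisingForm

section Filtration

variable {k R : Type*} [Field k] [Ring R] [Algebra k R] {M : Submodule k R}

theorem pow_succ_succ_le (hM : M * M ≤ M) (n : ℕ) : M ^ (n + 2) ≤ M ^ (n + 1) := by
  induction n with
  | zero => simpa [sq] using hM
  | succ n ih => rw [pow_succ _ (n + 2), pow_succ _ (n + 1)]; exact mul_le_mul_left ih M

theorem pow_eq_bot_of_pow_succ_eq {N : ℕ} (hN : M ^ N = ⊥) {n : ℕ} (h : M ^ (n + 1) = M ^ n) :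
    M ^ n = ⊥ := by
  have hstable : ∀ j, M ^ (n + j) = M ^ n := by
    intro j
    induction j with
    | zero => rfl
    | succ j ih => rw [← add_assoc, pow_succ, ih, ← pow_succ, h]
  rw [← hstable N, pow_add, hN, mul_bot]

variable [FiniteDimensional k R]

theorem finrank_pow_succ_succ_lt (hM : M * M ≤ M) {N : ℕ} (hN : M ^ N = ⊥) {n : ℕ}
    (hn : M ^ (n + 1) ≠ ⊥) : finrank k ↥(M ^ (n + 2)) < finrank k ↥(M ^ (n + 1)) :=
  Submodule.finrank_lt_finrank_of_lt <| (pow_succ_succ_le hM n).lt_of_ne fun h =>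
    hn (pow_eq_bot_of_pow_succ_eq hN h)

theorem finrank_pow_two_lt (hM : M * M ≤ M) {N : ℕ} (hN : M ^ N = ⊥) (h : M ≠ ⊥) :
    finrank k ↥(M ^ 2) < finrank k M := by
  have := finrank_pow_succ_succ_lt hM hN (n := 0) (by rwa [zero_add, pow_one])
  rwa [zero_add, pow_one] at this

theorem pow_eq_bot_of_finrank_le (hM : M * M ≤ M) {N : ℕ} (hN : M ^ N = ⊥) (m : ℕ) :
    ∀ n, finrank k ↥(M ^ (n + 1)) ≤ m → M ^ (n + 1 + m) = ⊥ := by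
  induction m with
  | zero => intro n h; exact Submodule.finrank_eq_zero.mp (Nat.le_zero.mp h)
  | succ m ih =>
    intro n h
    by_cases hn : M ^ (n + 1) = ⊥
    · rw [pow_add, hn, bot_mul]
    · have := ih (n + 1) (Nat.le_of_lt_succ ((finrank_pow_succ_succ_lt hM hN hn).trans_le h))
      rwa [show n + 1 + 1 + m = n + 1 + (m + 1) by omega] at this

end Filtration

section Split

variable {k R : Type*} [Field k] [Ring R] [Algebra k R] {M : Submodule k R}

theorem finrank_add_one_of_split [FiniteDimensional k R]
    (hsplit : ∀ r : R, ∃ c : k, r - algebraMap k R c ∈ M) (h1 : (1 : R) ∉ M) :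
    finrank k M + 1 = finrank k R := by
  have htop : M ⊔ span k {1} = ⊤ := by
    refine eq_top_iff.mpr fun r _ => ?_
    obtain ⟨c, hc⟩ := hsplit r
    refine mem_sup.mpr ⟨_, hc, c • 1, smul_mem _ c (mem_span_singleton_self 1), ?_⟩
    rw [Algebra.algebraMap_eq_smul_one, sub_add_cancel]
  rw [← finrank_sup_span_singleton h1, htop, finrank_top]

theorem mul_comm_of_forall_mem (hsplit : ∀ r : R, ∃ c : k, r - algebraMap k R c ∈ M)
    (hM : ∀ a ∈ M, ∀ b ∈ M, a * b = b * a) (a b : R) : a * b = b * a := by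
  obtain ⟨c, hc⟩ := hsplit a
  obtain ⟨d, hd⟩ := hsplit b
  rw [← sub_eq_zero, ← sub_eq_zero.mpr (hM _ hc _ hd)]
  simp only [Algebra.algebraMap_eq_smul_one, sub_mul, mul_sub, smul_mul_assoc, mul_smul_comm,
    one_mul, mul_one]
  module

end Split

section Commutators

variable {k R : Type*} [Field k] [Ring R] [Algebra k R] {M : Submodule k R} {s : R →ₗ[k] k}

theorem mul_comm_of_forall_map_commutator_mul_eq_zero
    (hsymm : ∀ a b : R, s (a * b) = s (b * a))
    (hfaith : ∀ I : Ideal R, (∀ x ∈ I, s x = 0) → I = ⊥)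
    (hsplit : ∀ r : R, ∃ c : k, r - algebraMap k R c ∈ M)
    (h : ∀ a ∈ M, ∀ b ∈ M, ∀ r ∈ M, s ((a * b - b * a) * r) = 0) (a b : R) :
    a * b = b * a := by
  refine mul_comm_of_forall_mem hsplit (fun a ha b hb => sub_eq_zero.mp ?_) a b
  refine eq_zero_of_forall_map_mul_eq_zero hsymm hfaith fun r => ?_
  obtain ⟨c, hc⟩ := hsplit r
  set x := a * b - b * a
  calc s (x * r) = s (x * (r - algebraMap k R c) + c • x) := by
        rw [Algebra.smul_def, Algebra.commutes, ← mul_add, sub_add_cancel]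
    _ = s (x * (r - algebraMap k R c)) + c * s x := by rw [map_add, map_smul, smul_eq_mul]
    _ = 0 := by rw [h a ha b hb _ hc, map_sub, hsymm, sub_self, mul_zero, add_zero]

theorem commutator_mem_pow_two {a b : R} (ha : a ∈ M) (hb : b ∈ M) : a * b - b * a ∈ M ^ 2 :=
  sub_mem (pow_two M ▸ mul_mem_mul ha hb) (pow_two M ▸ mul_mem_mul hb ha)

theorem commutator_mem_pow_three {a b : R} (hb : b ∈ M) (ha : a ∈ span k {b} ⊔ M ^ 2) :
    a * b - b * a ∈ M ^ 3 := by
  obtain ⟨_, ht, m, hm, rfl⟩ := mem_sup.mp ha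
  obtain ⟨t, rfl⟩ := mem_span_singleton.mp ht
  have hmb : m * b ∈ M ^ 3 := pow_succ M 2 ▸ mul_mem_mul hm hb
  have hbm : b * m ∈ M ^ 3 := pow_succ' M 2 ▸ mul_mem_mul hb hm
  convert sub_mem hmb hbm using 1
  simp only [add_mul, mul_add, smul_mul_assoc, mul_smul_comm]
  abel

theorem mul_comm_of_pow_three_eq_bot (hsymm : ∀ a b : R, s (a * b) = s (b * a))
    (hfaith : ∀ I : Ideal R, (∀ x ∈ I, s x = 0) → I = ⊥)
    (hsplit : ∀ r : R, ∃ c : k, r - algebraMap k R c ∈ M) (h3 : M ^ 3 = ⊥) (a b : R) :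
    a * b = b * a := by
  refine mul_comm_of_forall_map_commutator_mul_eq_zero hsymm hfaith hsplit
    (fun a ha b hb r hr => ?_) a b
  have : (a * b - b * a) * r ∈ M ^ 3 :=
    pow_succ M 2 ▸ mul_mem_mul (commutator_mem_pow_two ha hb) hr
  rw [h3, mem_bot] at this
  rw [this, map_zero]

variable [FiniteDimensional k R]

theorem map_commutator_mul_eq_zero_of_pow_four_eq_bot
    (hsymm : ∀ a b : R, s (a * b) = s (b * a)) (hM : M * M ≤ M) (h4 : M ^ 4 = ⊥)
    (hdim : finrank k M ≤ finrank k ↥(M ^ 2) + 2) {a b r : R} (ha : a ∈ M) (hb : b ∈ M)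
    (hr : r ∈ M) : s ((a * b - b * a) * r) = 0 := by
  have of_mem_pow_three : a * b - b * a ∈ M ^ 3 → s ((a * b - b * a) * r) = 0 := fun h => by
    have : (a * b - b * a) * r ∈ M ^ 4 := pow_succ M 3 ▸ mul_mem_mul h hr
    rw [h4, mem_bot] at this
    rw [this, map_zero]
  by_cases hb2 : b ∈ M ^ 2
  · refine of_mem_pow_three ?_
    rw [← neg_sub]
    exact neg_mem (commutator_mem_pow_three ha (mem_sup_right hb2))
  by_cases ha2 : a ∈ span k {b} ⊔ M ^ 2
  · exact of_mem_pow_three (commutator_mem_pow_three hb ha2)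
  have hspan : M ^ 2 ⊔ span k {b} ⊔ span k {a} = M := by
    refine eq_of_le_of_finrank_le ?_ ?_
    · simp only [sup_le_iff, span_singleton_le_iff_mem]
      exact ⟨⟨(sq M).trans_le hM, hb⟩, ha⟩
    · rw [finrank_sup_span_singleton (by rwa [sup_comm]), finrank_sup_span_singleton hb2]
      omega
  rw [← hspan] at hr
  obtain ⟨_, hmb, _, ht, rfl⟩ := mem_sup.mp hr
  obtain ⟨m, hm, _, hμ, rfl⟩ := mem_sup.mp hmb
  obtain ⟨t, rfl⟩ := mem_span_singleton.mp ht
  obtain ⟨μ, rfl⟩ := mem_span_singleton.mp hμ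
  have hm3 : (a * b - b * a) * m = 0 := by
    have : (a * b - b * a) * m ∈ M ^ 4 := by
      rw [show 4 = 2 + 2 by rfl, pow_add]
      exact mul_mem_mul (commutator_mem_pow_two ha hb) hm
    rwa [h4, mem_bot] at this
  simp only [mul_add, mul_smul_comm, map_add, map_smul, hm3, map_zero,
    map_commutator_mul_left_eq_zero hsymm, map_commutator_mul_right_eq_zero hsymm, smul_zero,
    add_zero]

end Commutators

section Cyclic

variable {k R : Type*} [Field k] [Ring R] [Algebra k R] {M : Submodule k R} {x : R}

theorem pow_succ_le_span_pow_sup (hM : M * M ≤ M) (hx : x ∈ M)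
    (hgen : M ≤ span k {x} ⊔ M ^ 2) (n : ℕ) :
    M ^ (n + 1) ≤ span k {x ^ (n + 1)} ⊔ M ^ (n + 2) := by
  induction n with
  | zero => simpa using hgen
  | succ n ih =>
    have hxn : span k {x ^ (n + 1)} ≤ M ^ (n + 1) :=
      span_singleton_le_iff_mem _ _ |>.mpr (pow_mem_pow M hx _)
    calc M ^ (n + 2) = M ^ (n + 1) * M := pow_succ M (n + 1)
      _ ≤ (span k {x ^ (n + 1)} ⊔ M ^ (n + 2)) * (span k {x} ⊔ M ^ 2) := mul_le_mul' ih hgen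
      _ ≤ span k {x ^ (n + 2)} ⊔ M ^ (n + 3) := by
        rw [Submodule.sup_mul, Submodule.mul_sup, Submodule.mul_sup, span_mul_span,
          Set.singleton_mul_singleton, ← pow_succ]
        refine sup_le (sup_le le_sup_left (le_sup_of_le_right ?_))
          (le_sup_of_le_right (sup_le ?_ ?_))
        · exact (mul_le_mul_left hxn _).trans (pow_add M (n + 1) 2).ge
        · exact (mul_le_mul_right (span_singleton_le_iff_mem _ _ |>.mpr hx) _).trans
            (pow_succ M (n + 2)).ge
        · rw [← pow_add]
          exact pow_succ_succ_le hM (n + 2)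

theorem le_adjoin_of_le_span_singleton_sup (hM : M * M ≤ M) {N : ℕ} (hN : M ^ N = ⊥)
    (hx : x ∈ M) (hgen : M ≤ span k {x} ⊔ M ^ 2) :
    M ≤ Subalgebra.toSubmodule (Algebra.adjoin k {x}) := by
  set A := Subalgebra.toSubmodule (Algebra.adjoin k {x})
  have hle : ∀ n, M ≤ A ⊔ M ^ (n + 1) := by
    intro n
    induction n with
    | zero => simp
    | succ n ih =>
      have hxn : span k {x ^ (n + 1)} ≤ A := span_singleton_le_iff_mem _ _ |>.mpr
        (Subalgebra.pow_mem _ (Algebra.self_mem_adjoin_singleton k x) _)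
      exact ih.trans (sup_le le_sup_left
        ((pow_succ_le_span_pow_sup hM hx hgen n).trans (sup_le_sup_right hxn _)))
  simpa [pow_succ, hN] using hle N

theorem mul_comm_of_le_span_singleton_sup
    (hsplit : ∀ r : R, ∃ c : k, r - algebraMap k R c ∈ M) (hM : M * M ≤ M) {N : ℕ}
    (hN : M ^ N = ⊥) (hx : x ∈ M) (hgen : M ≤ span k {x} ⊔ M ^ 2)
    (a b : R) : a * b = b * a := by
  have hA := le_adjoin_of_le_span_singleton_sup hM hN hx hgen
  refine mul_comm_of_forall_mem hsplit (fun a ha b hb => ?_) a b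
  exact congrArg Subtype.val (mul_comm (⟨a, hA ha⟩ : Algebra.adjoin k {x}) ⟨b, hA hb⟩)

theorem mul_comm_of_finrank_eq_finrank_pow_two_add_one [FiniteDimensional k R]
    (hsplit : ∀ r : R, ∃ c : k, r - algebraMap k R c ∈ M) (hM : M * M ≤ M) {N : ℕ}
    (hN : M ^ N = ⊥) (hdim : finrank k M = finrank k ↥(M ^ 2) + 1) (a b : R) :
    a * b = b * a := by
  have hM2 : M ^ 2 ≤ M := (sq M).trans_le hM
  obtain ⟨x, hxM, hx2⟩ := SetLike.exists_of_lt (hM2.lt_of_ne fun h => by rw [h] at hdim; omega)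
  have hgen : M ^ 2 ⊔ span k {x} = M := eq_of_le_of_finrank_le
    (sup_le hM2 (span_singleton_le_iff_mem _ _ |>.mpr hxM))
    (by rw [finrank_sup_span_singleton hx2, hdim])
  exact mul_comm_of_le_span_singleton_sup hsplit hM hN hxM (by rw [sup_comm, hgen]) a b

end Cyclic

section Jacobson

variable {k R : Type*} [Field k] [Ring R] [Algebra k R]

theorem restrictScalars_mul_self_le (I : Ideal R) :
    I.restrictScalars k * I.restrictScalars k ≤ I.restrictScalars k :=
  mul_le.mpr fun a _ _ hb => I.mul_mem_left a hb

theorem exists_pow_restrictScalars_jacobson_eq_bot [FiniteDimensional k R] :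
    ∃ N, ((⊥ : Ideal R).jacobson.restrictScalars k) ^ N = ⊥ := by
  have := IsArtinianRing.of_finite k R
  obtain ⟨n, hn⟩ := IsArtinianRing.isNilpotent_jacobson_bot (R := R)
  refine ⟨n + 1, ?_⟩
  rw [← restrictScalars_pow n.add_one_ne_zero, Submodule.pow_succ, hn, zero_mul, zero_eq_bot,
    restrictScalars_bot]

end Jacobson

theorem stmt_3_general (k R : Type*) [Field k] [Ring R] [Algebra k R]
    (hdim : Module.finrank k R = 5)
    (hsplit : ∀ r : R, ∃ c : k, r - algebraMap k R c ∈ (⊥ : Ideal R).jacobson)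
    (s : R →ₗ[k] k)
    (hsymm : ∀ a b : R, s (a * b) = s (b * a))
    (hfaith : ∀ I : Ideal R, (∀ x ∈ I, s x = 0) → I = ⊥) :
    ∀ a b : R, a * b = b * a := by
  have : FiniteDimensional k R := .of_finrank_pos (by omega)
  obtain ⟨N, hN⟩ := exists_pow_restrictScalars_jacobson_eq_bot (k := k) (R := R)
  set M := (⊥ : Ideal R).jacobson.restrictScalars k
  have hM : M * M ≤ M := restrictScalars_mul_self_le _
  replace hsplit : ∀ r : R, ∃ c : k, r - algebraMap k R c ∈ M := hsplit
  have h1 : (1 : R) ∉ M := fun h => by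
    have : Nontrivial R := Module.nontrivial_of_finrank_eq_succ hdim
    simpa [hN] using pow_mem_pow M h N
  have hM4 : finrank k M = 4 := by have := finrank_add_one_of_split hsplit h1; omega
  have hd2 := finrank_pow_two_lt hM hN fun h => by rw [h, finrank_bot] at hM4; omega
  obtain h | h | h : finrank k ↥(M ^ 2) ≤ 1 ∨ finrank k ↥(M ^ 2) = 2 ∨
      finrank k ↥(M ^ 2) = 3 := by omega
  · exact mul_comm_of_pow_three_eq_bot hsymm hfaith hsplit (pow_eq_bot_of_finrank_le hM hN 1 1 h)
  · have h4 : M ^ 4 = ⊥ := pow_eq_bot_of_finrank_le hM hN 2 1 h.le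
    exact mul_comm_of_forall_map_commutator_mul_eq_zero hsymm hfaith hsplit fun a ha b hb r hr =>
      map_commutator_mul_eq_zero_of_pow_four_eq_bot hsymm hM h4 (by omega) ha hb hr
  · exact mul_comm_of_finrank_eq_finrank_pow_two_add_one hsplit hM hN (by omega)

/-- Every split local symmetric algebra of dimension `5` over an algebraically closed
field `k` is commutative. -/
theorem stmt_3 (k R : Type*) [Field k] [IsAlgClosed k] [Ring R] [Algebra k R]
    [IsLocalRing R]
    (hdim : Module.finrank k R = 5)
    (hsplit : ∀ r : R, ∃ c : k, r - algebraMap k R c ∈ (⊥ : Ideal R).jacobson)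
    (s : R →ₗ[k] k)
    (hsymm : ∀ a b : R, s (a * b) = s (b * a))
    (hfaith : ∀ I : Ideal R, (∀ x ∈ I, s x = 0) → I = ⊥) :
    ∀ a b : R, a * b = b * a :=
  stmt_3_general k R hdim hsplit s hsymm hfaith
end

section
/- For the 9-dimensional quiver algebra A with basis {i, j, α, β, βα, γ, γ², δ, δ²} and relations δ² = γ³ = αβ, δγ = γδ = 0, δα = γα = 0, βδ = βγ = 0, the commutator subspace [A,A] has k-basis {α, β, αβ − βα}. -/
/-! The 9-dimensional algebra `A` given by the quiver with vertices `i, j`, arrows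
`α : i → j`, `β : j → i`, and loops `γ, δ` at `i`, with relations
`δ² = γ³ = αβ`, `δγ = γδ = 0`, `δα = γα = 0`, `βδ = βγ = 0`.
Paths compose left-to-right, so the product `x * y` means "first `x`, then `y`";
in particular `α * β` is a loop at `i` and `β * α` is a loop at `j`.
We realise `A` as the quotient of the free algebra on the six generators
`e_i, e_j, α, β, γ, δ` by the path-algebra relations together with the quiver relations. -/

open FreeAlgebra

/-- The defining relations of the quiver algebra: generator `0` is the vertex idempotent
`e_i`, `1` is `e_j`, `2` is `α : i → j`, `3` is `β : j → i`, `4` is the loop `γ` at `i`,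
and `5` is the loop `δ` at `i`. -/
inductive QuiverRel (k : Type*) [Field k] :
    FreeAlgebra k (Fin 6) → FreeAlgebra k (Fin 6) → Prop
  | idem_i : QuiverRel k (ι k 0 * ι k 0) (ι k 0)
  | idem_j : QuiverRel k (ι k 1 * ι k 1) (ι k 1)
  | orth_ij : QuiverRel k (ι k 0 * ι k 1) 0
  | orth_ji : QuiverRel k (ι k 1 * ι k 0) 0
  | sum_idem : QuiverRel k (ι k 0 + ι k 1) 1
  | alpha_src : QuiverRel k (ι k 0 * ι k 2) (ι k 2)   -- α starts at i
  | alpha_tgt : QuiverRel k (ι k 2 * ι k 1) (ι k 2)   -- α ends at j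
  | beta_src : QuiverRel k (ι k 1 * ι k 3) (ι k 3)    -- β starts at j
  | beta_tgt : QuiverRel k (ι k 3 * ι k 0) (ι k 3)    -- β ends at i
  | gamma_src : QuiverRel k (ι k 0 * ι k 4) (ι k 4)
  | gamma_tgt : QuiverRel k (ι k 4 * ι k 0) (ι k 4)
  | delta_src : QuiverRel k (ι k 0 * ι k 5) (ι k 5)
  | delta_tgt : QuiverRel k (ι k 5 * ι k 0) (ι k 5)
  | delta_sq : QuiverRel k (ι k 5 * ι k 5) (ι k 2 * ι k 3)        -- δ² = αβ
  | gamma_cube : QuiverRel k (ι k 4 * (ι k 4 * ι k 4)) (ι k 2 * ι k 3)  -- γ³ = αβ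
  | delta_gamma : QuiverRel k (ι k 5 * ι k 4) 0
  | gamma_delta : QuiverRel k (ι k 4 * ι k 5) 0
  | delta_alpha : QuiverRel k (ι k 5 * ι k 2) 0
  | gamma_alpha : QuiverRel k (ι k 4 * ι k 2) 0
  | beta_delta : QuiverRel k (ι k 3 * ι k 5) 0
  | beta_gamma : QuiverRel k (ι k 3 * ι k 4) 0

variable (k : Type*) [Field k]

/-- The 9-dimensional quiver algebra `A`. -/
abbrev QuiverAlg := RingQuot (QuiverRel k)

/-- The vertex idempotent `i`. -/
noncomputable def qi : QuiverAlg k := RingQuot.mkAlgHom k (QuiverRel k) (ι k 0)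
/-- The vertex idempotent `j`. -/
noncomputable def qj : QuiverAlg k := RingQuot.mkAlgHom k (QuiverRel k) (ι k 1)
/-- The arrow `α : i → j`. -/
noncomputable def qα : QuiverAlg k := RingQuot.mkAlgHom k (QuiverRel k) (ι k 2)
/-- The arrow `β : j → i`. -/
noncomputable def qβ : QuiverAlg k := RingQuot.mkAlgHom k (QuiverRel k) (ι k 3)
/-- The loop `γ` at `i`. -/
noncomputable def qγ : QuiverAlg k := RingQuot.mkAlgHom k (QuiverRel k) (ι k 4)
/-- The loop `δ` at `i`. -/
noncomputable def qδ : QuiverAlg k := RingQuot.mkAlgHom k (QuiverRel k) (ι k 5)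

/-- The standard basis vector `{i, j, α, β, βα, γ, γ², δ, δ²}` of `A`. -/
noncomputable def qbasisVec : Fin 9 → QuiverAlg k :=
  ![qi k, qj k, qα k, qβ k, qβ k * qα k, qγ k, qγ k ^ 2, qδ k, qδ k ^ 2]

/-! The nine monomials `i, j, α, β, βα, γ, γ², δ, αβ = δ²` span `A`: the relations rewrite every
product of two of them to `0` or to one of them. Hence `[A,A]` is spanned by the commutators of
pairs of monomials, each of which is `0`, `±α`, `±β` or `±(αβ − βα)`; conversely `α = [i, α]` and
`β = [j, β]`. For independence, `A` acts on `k³` by `i ↦ E₀₀`, `j ↦ E₁₁ + E₂₂`, `α ↦ E₀₂`,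
`β ↦ E₁₀`, `γ, δ ↦ 0` (forcing `αβ ↦ 0`, while `βα ↦ E₁₂`), which sends `α, β, αβ − βα` to
independent matrices. -/

theorem RingQuot.mkAlgHom_mul_eq_of_rel (R : Type*) {A : Type*} [CommSemiring R] [Semiring A]
    [Algebra R A] {r : A → A → Prop} {x y : A} (h : r x y) (w : RingQuot r) :
    mkAlgHom R r x * w = mkAlgHom R r y * w := by
  rw [mkAlgHom_rel R h]

theorem commutator_mem_of_mem_span {R A : Type*} [CommRing R] [Ring A] [Algebra R A] {s : Set A}
    {p : Submodule R A} (h : ∀ x ∈ s, ∀ y ∈ s, x * y - y * x ∈ p) {x y : A}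
    (hx : x ∈ Submodule.span R s) (hy : y ∈ Submodule.span R s) : x * y - y * x ∈ p := by
  let commutator := LinearMap.mul R A - (LinearMap.mul R A).flip
  have hxy := Submodule.apply_mem_map₂ commutator hx hy
  rw [Submodule.map₂_span_span] at hxy
  refine Submodule.span_le.2 ?_ hxy
  rintro _ ⟨a, ha, b, hb, rfl⟩
  exact h a ha b hb

namespace QuiverAlg

variable {k}

/- A rewriting rule `x * y = z` of the path calculus is stated as `x * (y * w) = z * w`, so that
`simp` applies it inside right-nested products; products to be normalised are padded with `* 1`. -/

section DefiningRelations

attribute [local simp] qi qj qα qβ qγ qδ mul_assoc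

theorem qi_add_qj : qi k + qj k = 1 := by
  simpa using RingQuot.mkAlgHom_rel k (QuiverRel.sum_idem (k := k))

@[simp] theorem qi_mul_qi_mul (w : QuiverAlg k) : qi k * (qi k * w) = qi k * w := by
  simpa using RingQuot.mkAlgHom_mul_eq_of_rel k .idem_i w
@[simp] theorem qj_mul_qj_mul (w : QuiverAlg k) : qj k * (qj k * w) = qj k * w := by
  simpa using RingQuot.mkAlgHom_mul_eq_of_rel k .idem_j w
@[simp] theorem qi_mul_qj_mul (w : QuiverAlg k) : qi k * (qj k * w) = 0 := by
  simpa using RingQuot.mkAlgHom_mul_eq_of_rel k .orth_ij w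
@[simp] theorem qj_mul_qi_mul (w : QuiverAlg k) : qj k * (qi k * w) = 0 := by
  simpa using RingQuot.mkAlgHom_mul_eq_of_rel k .orth_ji w
@[simp] theorem qi_mul_qα_mul (w : QuiverAlg k) : qi k * (qα k * w) = qα k * w := by
  simpa using RingQuot.mkAlgHom_mul_eq_of_rel k .alpha_src w
@[simp] theorem qα_mul_qj_mul (w : QuiverAlg k) : qα k * (qj k * w) = qα k * w := by
  simpa using RingQuot.mkAlgHom_mul_eq_of_rel k .alpha_tgt w
@[simp] theorem qj_mul_qβ_mul (w : QuiverAlg k) : qj k * (qβ k * w) = qβ k * w := by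
  simpa using RingQuot.mkAlgHom_mul_eq_of_rel k .beta_src w
@[simp] theorem qβ_mul_qi_mul (w : QuiverAlg k) : qβ k * (qi k * w) = qβ k * w := by
  simpa using RingQuot.mkAlgHom_mul_eq_of_rel k .beta_tgt w
@[simp] theorem qi_mul_qγ_mul (w : QuiverAlg k) : qi k * (qγ k * w) = qγ k * w := by
  simpa using RingQuot.mkAlgHom_mul_eq_of_rel k .gamma_src w
@[simp] theorem qγ_mul_qi_mul (w : QuiverAlg k) : qγ k * (qi k * w) = qγ k * w := by
  simpa using RingQuot.mkAlgHom_mul_eq_of_rel k .gamma_tgt w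
@[simp] theorem qi_mul_qδ_mul (w : QuiverAlg k) : qi k * (qδ k * w) = qδ k * w := by
  simpa using RingQuot.mkAlgHom_mul_eq_of_rel k .delta_src w
@[simp] theorem qδ_mul_qi_mul (w : QuiverAlg k) : qδ k * (qi k * w) = qδ k * w := by
  simpa using RingQuot.mkAlgHom_mul_eq_of_rel k .delta_tgt w
@[simp] theorem qδ_mul_qδ_mul (w : QuiverAlg k) : qδ k * (qδ k * w) = qα k * (qβ k * w) := by
  simpa using RingQuot.mkAlgHom_mul_eq_of_rel k .delta_sq w
@[simp] theorem qγ_mul_qγ_mul_qγ_mul (w : QuiverAlg k) :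
    qγ k * (qγ k * (qγ k * w)) = qα k * (qβ k * w) := by
  simpa using RingQuot.mkAlgHom_mul_eq_of_rel k .gamma_cube w
@[simp] theorem qδ_mul_qγ_mul (w : QuiverAlg k) : qδ k * (qγ k * w) = 0 := by
  simpa using RingQuot.mkAlgHom_mul_eq_of_rel k .delta_gamma w
@[simp] theorem qγ_mul_qδ_mul (w : QuiverAlg k) : qγ k * (qδ k * w) = 0 := by
  simpa using RingQuot.mkAlgHom_mul_eq_of_rel k .gamma_delta w
@[simp] theorem qδ_mul_qα_mul (w : QuiverAlg k) : qδ k * (qα k * w) = 0 := by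
  simpa using RingQuot.mkAlgHom_mul_eq_of_rel k .delta_alpha w
@[simp] theorem qγ_mul_qα_mul (w : QuiverAlg k) : qγ k * (qα k * w) = 0 := by
  simpa using RingQuot.mkAlgHom_mul_eq_of_rel k .gamma_alpha w
@[simp] theorem qβ_mul_qδ_mul (w : QuiverAlg k) : qβ k * (qδ k * w) = 0 := by
  simpa using RingQuot.mkAlgHom_mul_eq_of_rel k .beta_delta w
@[simp] theorem qβ_mul_qγ_mul (w : QuiverAlg k) : qβ k * (qγ k * w) = 0 := by
  simpa using RingQuot.mkAlgHom_mul_eq_of_rel k .beta_gamma w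

end DefiningRelations

@[simp] theorem qi_mul_qβ_mul (w : QuiverAlg k) : qi k * (qβ k * w) = 0 := by
  rw [← qj_mul_qβ_mul, qi_mul_qj_mul]
@[simp] theorem qj_mul_qα_mul (w : QuiverAlg k) : qj k * (qα k * w) = 0 := by
  rw [← qi_mul_qα_mul, qj_mul_qi_mul]
@[simp] theorem qj_mul_qγ_mul (w : QuiverAlg k) : qj k * (qγ k * w) = 0 := by
  rw [← qi_mul_qγ_mul, qj_mul_qi_mul]
@[simp] theorem qj_mul_qδ_mul (w : QuiverAlg k) : qj k * (qδ k * w) = 0 := by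
  rw [← qi_mul_qδ_mul, qj_mul_qi_mul]
@[simp] theorem qα_mul_qi_mul (w : QuiverAlg k) : qα k * (qi k * w) = 0 := by
  rw [← qα_mul_qj_mul, qj_mul_qi_mul, mul_zero]
@[simp] theorem qβ_mul_qj_mul (w : QuiverAlg k) : qβ k * (qj k * w) = 0 := by
  rw [← qβ_mul_qi_mul, qi_mul_qj_mul, mul_zero]
@[simp] theorem qγ_mul_qj_mul (w : QuiverAlg k) : qγ k * (qj k * w) = 0 := by
  rw [← qγ_mul_qi_mul, qi_mul_qj_mul, mul_zero]
@[simp] theorem qδ_mul_qj_mul (w : QuiverAlg k) : qδ k * (qj k * w) = 0 := by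
  rw [← qδ_mul_qi_mul, qi_mul_qj_mul, mul_zero]
@[simp] theorem qα_mul_qα_mul (w : QuiverAlg k) : qα k * (qα k * w) = 0 := by
  rw [← qi_mul_qα_mul w, qα_mul_qi_mul]
@[simp] theorem qα_mul_qγ_mul (w : QuiverAlg k) : qα k * (qγ k * w) = 0 := by
  rw [← qi_mul_qγ_mul, qα_mul_qi_mul]
@[simp] theorem qα_mul_qδ_mul (w : QuiverAlg k) : qα k * (qδ k * w) = 0 := by
  rw [← qi_mul_qδ_mul, qα_mul_qi_mul]
@[simp] theorem qβ_mul_qβ_mul (w : QuiverAlg k) : qβ k * (qβ k * w) = 0 := by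
  rw [← qj_mul_qβ_mul w, qβ_mul_qj_mul]
@[simp] theorem qγ_mul_qβ_mul (w : QuiverAlg k) : qγ k * (qβ k * w) = 0 := by
  rw [← qj_mul_qβ_mul, qγ_mul_qj_mul]
@[simp] theorem qδ_mul_qβ_mul (w : QuiverAlg k) : qδ k * (qβ k * w) = 0 := by
  rw [← qj_mul_qβ_mul, qδ_mul_qj_mul]
@[simp] theorem qα_mul_qβ_mul_qα_mul (w : QuiverAlg k) : qα k * (qβ k * (qα k * w)) = 0 := by
  rw [← qδ_mul_qδ_mul, qδ_mul_qα_mul, mul_zero]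
@[simp] theorem qβ_mul_qα_mul_qβ_mul (w : QuiverAlg k) : qβ k * (qα k * (qβ k * w)) = 0 := by
  rw [← qδ_mul_qδ_mul, qβ_mul_qδ_mul]

theorem qδ_mul_qδ : qδ k * qδ k = qα k * qβ k := by
  simpa using qδ_mul_qδ_mul (1 : QuiverAlg k)

theorem range_qbasisVec : Set.range (qbasisVec k) =
    {qi k, qj k, qα k, qβ k, qβ k * qα k, qγ k, qγ k * qγ k, qδ k, qα k * qβ k} := by
  simp only [qbasisVec, Matrix.range_cons, Matrix.range_empty, Set.union_empty,
    Set.singleton_union, sq, qδ_mul_qδ]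

theorem qbasisVec_mul_mem_span (m n : Fin 9) :
    qbasisVec k m * qbasisVec k n ∈ Submodule.span k (Set.range (qbasisVec k)) := by
  rw [range_qbasisVec, ← mul_one (qbasisVec k m * qbasisVec k n)]
  fin_cases m <;> fin_cases n <;> simp [qbasisVec, sq, mul_assoc, -mul_one] <;>
    exact Submodule.subset_span (by simp)

theorem span_range_qbasisVec : Submodule.span k (Set.range (qbasisVec k)) = ⊤ := by
  set S := Submodule.span k (Set.range (qbasisVec k))
  have mem (m : Fin 9) : qbasisVec k m ∈ S := Submodule.subset_span ⟨m, rfl⟩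
  have mul_le : S * S ≤ S := by
    rw [Submodule.span_mul_span, Submodule.span_le]
    rintro _ ⟨_, ⟨m, rfl⟩, _, ⟨n, rfl⟩, rfl⟩
    exact qbasisVec_mul_mem_span m n
  refine Submodule.eq_top_iff'.2 fun x => ?_
  obtain ⟨y, rfl⟩ := RingQuot.mkAlgHom_surjective k (QuiverRel k) x
  induction y using FreeAlgebra.induction with
  | grade0 r =>
    rw [AlgHom.commutes, Algebra.algebraMap_eq_smul_one, ← qi_add_qj]
    exact S.smul_mem r (add_mem (mem 0) (mem 1))
  | grade1 n => fin_cases n; exacts [mem 0, mem 1, mem 2, mem 3, mem 5, mem 7]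
  | mul a b ha hb => rw [map_mul]; exact mul_le (Submodule.mul_mem_mul ha hb)
  | add a b ha hb => rw [map_add]; exact add_mem ha hb

variable (k) in
noncomputable def commutatorBasis : Fin 3 → QuiverAlg k :=
  ![qα k, qβ k, qα k * qβ k - qβ k * qα k]

theorem range_commutatorBasis : Set.range (commutatorBasis k) =
    {qα k, qβ k, qα k * qβ k - qβ k * qα k} := by
  simp only [commutatorBasis, Matrix.range_cons, Matrix.range_empty, Set.union_empty,
    Set.singleton_union]

theorem qbasisVec_commutator_mem_span (m n : Fin 9) :
    qbasisVec k m * qbasisVec k n - qbasisVec k n * qbasisVec k m ∈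
      Submodule.span k (Set.range (commutatorBasis k)) := by
  rw [range_commutatorBasis, ← mul_one (qbasisVec k m * qbasisVec k n),
    ← mul_one (qbasisVec k n * qbasisVec k m)]
  fin_cases m <;> fin_cases n <;> simp [qbasisVec, sq, mul_assoc, -mul_one] <;>
    simp only [mul_one] <;>
    first
    | (refine Submodule.subset_span ?_; simp; done)
    | (rw [← neg_sub (qα k * qβ k)]; exact neg_mem (Submodule.subset_span (by simp)))

theorem span_commutators_eq :
    Submodule.span k {x : QuiverAlg k | ∃ a c : QuiverAlg k, x = a * c - c * a} =
      Submodule.span k (Set.range (commutatorBasis k)) := by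
  apply le_antisymm
  · rw [Submodule.span_le]
    rintro _ ⟨a, c, rfl⟩
    have mem_span (x : QuiverAlg k) : x ∈ Submodule.span k (Set.range (qbasisVec k)) :=
      span_range_qbasisVec (k := k) ▸ Submodule.mem_top
    refine commutator_mem_of_mem_span ?_ (mem_span a) (mem_span c)
    rintro _ ⟨m, rfl⟩ _ ⟨n, rfl⟩
    exact qbasisVec_commutator_mem_span m n
  · have hα : qα k = qi k * qα k - qα k * qi k := by
      simpa using (show qα k * 1 = qi k * (qα k * 1) - qα k * (qi k * 1) by simp [-mul_one])
    have hβ : qβ k = qj k * qβ k - qβ k * qj k := by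
      simpa using (show qβ k * 1 = qj k * (qβ k * 1) - qβ k * (qj k * 1) by simp [-mul_one])
    rw [Submodule.span_le, range_commutatorBasis]
    rintro _ (rfl | rfl | rfl)
    exacts [Submodule.subset_span ⟨_, _, hα⟩, Submodule.subset_span ⟨_, _, hβ⟩,
      Submodule.subset_span ⟨_, _, rfl⟩]

variable (k) in
noncomputable def matrixRepGen : Fin 6 → Matrix (Fin 3) (Fin 3) k :=
  ![!![1, 0, 0; 0, 0, 0; 0, 0, 0], !![0, 0, 0; 0, 1, 0; 0, 0, 1], !![0, 0, 1; 0, 0, 0; 0, 0, 0],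
    !![0, 0, 0; 1, 0, 0; 0, 0, 0], 0, 0]

theorem lift_matrixRepGen_eq_of_rel ⦃x y : FreeAlgebra k (Fin 6)⦄ (h : QuiverRel k x y) :
    FreeAlgebra.lift k (matrixRepGen k) x = FreeAlgebra.lift k (matrixRepGen k) y := by
  induction h <;>
    · simp only [map_mul, map_add, map_one, map_zero, FreeAlgebra.lift_ι_apply, matrixRepGen,
        Matrix.cons_val]
      ext i j
      fin_cases i <;> fin_cases j <;> simp [Matrix.mul_apply, Fin.sum_univ_three]

variable (k) in
noncomputable def matrixRep : QuiverAlg k →ₐ[k] Matrix (Fin 3) (Fin 3) k :=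
  RingQuot.liftAlgHom k ⟨FreeAlgebra.lift k (matrixRepGen k), lift_matrixRepGen_eq_of_rel⟩

theorem matrixRep_mkAlgHom_ι (n : Fin 6) :
    matrixRep k (RingQuot.mkAlgHom k (QuiverRel k) (FreeAlgebra.ι k n)) = matrixRepGen k n := by
  rw [matrixRep, RingQuot.liftAlgHom_mkAlgHom_apply, FreeAlgebra.lift_ι_apply]

theorem linearIndependent_commutatorBasis : LinearIndependent k (commutatorBasis k) := by
  refine LinearIndependent.of_comp (matrixRep k).toLinearMap
    (Fintype.linearIndependent_iff.2 fun c hc => ?_)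
  have entry (a b : Fin 3) := congr_fun (congr_fun hc a) b
  obtain ⟨h₀, h₁, h₂⟩ : c 0 = 0 ∧ c 1 = 0 ∧ c 2 = 0 := by
    simpa [Fin.sum_univ_three, commutatorBasis, qα, qβ, matrixRep_mkAlgHom_ι, matrixRepGen] using
      And.intro (entry 0 2) (And.intro (entry 1 0) (entry 1 2))
  intro n
  fin_cases n <;> assumption

end QuiverAlg

/-- The commutator subspace `[A,A]` of the quiver algebra `A` has `k`-basis
`{α, β, αβ − βα}`. -/
theorem stmt_5 :
    ∃ b : Module.Basis (Fin 3) k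
      ↥(Submodule.span k {x : QuiverAlg k | ∃ a c : QuiverAlg k, x = a * c - c * a}),
      (b 0 : QuiverAlg k) = qα k ∧ (b 1 : QuiverAlg k) = qβ k ∧
      (b 2 : QuiverAlg k) = qα k * qβ k - qβ k * qα k := by
  rw [QuiverAlg.span_commutators_eq]
  refine ⟨.span QuiverAlg.linearIndependent_commutatorBasis, ?_, ?_, ?_⟩ <;>
    rw [Module.Basis.span_apply] <;> rfl
end

section
/- Let k have characteristic 3, and let A be the 9-dimensional quiver algebra above with symmetrising form s. The projective ideal Z^pr(A) = Tr₁^A(A), where Tr₁^A(u) = Σ_b b·u·b* is the sum over a basis b with s-dual basis b*, is one-dimensional with basis {αβ − βα}. -/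
/-! The 9-dimensional algebra `A` given by the quiver with vertices `i, j`, arrows
`α : i → j`, `β : j → i`, and loops `γ, δ` at `i`, with relations
`δ² = γ³ = αβ`, `δγ = γδ = 0`, `δα = γα = 0`, `βδ = βγ = 0`.
Paths compose left-to-right, so the product `x * y` means "first `x`, then `y`";
in particular `α * β` is a loop at `i` and `β * α` is a loop at `j`.
We realise `A` as the quotient of the free algebra on the six generators
`e_i, e_j, α, β, γ, δ` by the path-algebra relations together with the quiver relations. -/

open FreeAlgebra

variable (k : Type*) [Field k]

/-- The dual basis vector `{αβ, βα, β, α, j, γ², γ, δ, i}` (the `s`-duals of the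
standard basis elements `{i, j, α, β, βα, γ, γ², δ, δ²}`, in order). -/
noncomputable def qdualVec : Fin 9 → QuiverAlg k :=
  ![qα k * qβ k, qβ k * qα k, qβ k, qα k, qj k, qγ k ^ 2, qγ k, qδ k, qi k]

/-- The relative trace map `Tr₁^A(u) = Σ_b b·u·b*`, summed over the standard basis `b`
with `s`-dual basis `b*`. -/
noncomputable def qtrace (u : QuiverAlg k) : QuiverAlg k :=
  ∑ m : Fin 9, qbasisVec k m * u * qdualVec k m

/-! `Tr₁^A` is `k`-linear and `A` is spanned by its nine standard monomials, so its image is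
spanned by the traces of those. A direct computation in the path algebra shows that the trace
kills the seven monomials of the radical, while `Tr(e_i) = 5αβ + βα` and `Tr(e_j) = αβ + 2βα`,
which in characteristic `3` are `∓(αβ - βα)`. Finally `αβ - βα ≠ 0` because of a
3-dimensional representation in which `αβ` acts as zero but `βα` does not. -/

@[simp] lemma qi_mul_qi : qi k * qi k = qi k :=
  (map_mul _ _ _).symm.trans (RingQuot.mkAlgHom_rel k QuiverRel.idem_i)

@[simp] lemma qj_mul_qj : qj k * qj k = qj k :=
  (map_mul _ _ _).symm.trans (RingQuot.mkAlgHom_rel k QuiverRel.idem_j)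

@[simp] lemma qi_mul_qj : qi k * qj k = 0 :=
  ((map_mul _ _ _).symm.trans (RingQuot.mkAlgHom_rel k QuiverRel.orth_ij)).trans (map_zero _)

@[simp] lemma qj_mul_qi : qj k * qi k = 0 :=
  ((map_mul _ _ _).symm.trans (RingQuot.mkAlgHom_rel k QuiverRel.orth_ji)).trans (map_zero _)

lemma qi_add_qj : qi k + qj k = 1 :=
  ((map_add _ _ _).symm.trans (RingQuot.mkAlgHom_rel k QuiverRel.sum_idem)).trans (map_one _)

@[simp] lemma qi_mul_qα : qi k * qα k = qα k :=
  (map_mul _ _ _).symm.trans (RingQuot.mkAlgHom_rel k QuiverRel.alpha_src)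

@[simp] lemma qα_mul_qj : qα k * qj k = qα k :=
  (map_mul _ _ _).symm.trans (RingQuot.mkAlgHom_rel k QuiverRel.alpha_tgt)

@[simp] lemma qj_mul_qβ : qj k * qβ k = qβ k :=
  (map_mul _ _ _).symm.trans (RingQuot.mkAlgHom_rel k QuiverRel.beta_src)

@[simp] lemma qβ_mul_qi : qβ k * qi k = qβ k :=
  (map_mul _ _ _).symm.trans (RingQuot.mkAlgHom_rel k QuiverRel.beta_tgt)

@[simp] lemma qi_mul_qγ : qi k * qγ k = qγ k :=
  (map_mul _ _ _).symm.trans (RingQuot.mkAlgHom_rel k QuiverRel.gamma_src)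

@[simp] lemma qγ_mul_qi : qγ k * qi k = qγ k :=
  (map_mul _ _ _).symm.trans (RingQuot.mkAlgHom_rel k QuiverRel.gamma_tgt)

@[simp] lemma qi_mul_qδ : qi k * qδ k = qδ k :=
  (map_mul _ _ _).symm.trans (RingQuot.mkAlgHom_rel k QuiverRel.delta_src)

@[simp] lemma qδ_mul_qi : qδ k * qi k = qδ k :=
  (map_mul _ _ _).symm.trans (RingQuot.mkAlgHom_rel k QuiverRel.delta_tgt)

@[simp] lemma qδ_mul_qδ : qδ k * qδ k = qα k * qβ k :=
  (map_mul _ _ _).symm.trans ((RingQuot.mkAlgHom_rel k QuiverRel.delta_sq).trans (map_mul _ _ _))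

@[simp] lemma qγ_mul_qγ_mul_qγ : qγ k * qγ k * qγ k = qα k * qβ k := by
  rw [mul_assoc, qγ, ← map_mul, ← map_mul, RingQuot.mkAlgHom_rel k QuiverRel.gamma_cube, map_mul]
  rfl

@[simp] lemma qδ_mul_qγ : qδ k * qγ k = 0 :=
  ((map_mul _ _ _).symm.trans (RingQuot.mkAlgHom_rel k QuiverRel.delta_gamma)).trans (map_zero _)

@[simp] lemma qγ_mul_qδ : qγ k * qδ k = 0 :=
  ((map_mul _ _ _).symm.trans (RingQuot.mkAlgHom_rel k QuiverRel.gamma_delta)).trans (map_zero _)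

@[simp] lemma qδ_mul_qα : qδ k * qα k = 0 :=
  ((map_mul _ _ _).symm.trans (RingQuot.mkAlgHom_rel k QuiverRel.delta_alpha)).trans (map_zero _)

@[simp] lemma qγ_mul_qα : qγ k * qα k = 0 :=
  ((map_mul _ _ _).symm.trans (RingQuot.mkAlgHom_rel k QuiverRel.gamma_alpha)).trans (map_zero _)

@[simp] lemma qβ_mul_qδ : qβ k * qδ k = 0 :=
  ((map_mul _ _ _).symm.trans (RingQuot.mkAlgHom_rel k QuiverRel.beta_delta)).trans (map_zero _)

@[simp] lemma qβ_mul_qγ : qβ k * qγ k = 0 :=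
  ((map_mul _ _ _).symm.trans (RingQuot.mkAlgHom_rel k QuiverRel.beta_gamma)).trans (map_zero _)

lemma mul_eq_zero_of_mul_qi_of_qj_mul {x y : QuiverAlg k} (hx : x * qi k = x)
    (hy : qj k * y = y) : x * y = 0 := by
  rw [← hx, ← hy, mul_assoc, ← mul_assoc (qi k), qi_mul_qj, zero_mul, mul_zero]

lemma mul_eq_zero_of_mul_qj_of_qi_mul {x y : QuiverAlg k} (hx : x * qj k = x)
    (hy : qi k * y = y) : x * y = 0 := by
  rw [← hx, ← hy, mul_assoc, ← mul_assoc (qj k), qj_mul_qi, zero_mul, mul_zero]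


@[simp] lemma qj_mul_qα : qj k * qα k = 0 :=
  mul_eq_zero_of_mul_qj_of_qi_mul k (qj_mul_qj k) (qi_mul_qα k)

@[simp] lemma qj_mul_qγ : qj k * qγ k = 0 :=
  mul_eq_zero_of_mul_qj_of_qi_mul k (qj_mul_qj k) (qi_mul_qγ k)

@[simp] lemma qj_mul_qδ : qj k * qδ k = 0 :=
  mul_eq_zero_of_mul_qj_of_qi_mul k (qj_mul_qj k) (qi_mul_qδ k)

@[simp] lemma qi_mul_qβ : qi k * qβ k = 0 :=
  mul_eq_zero_of_mul_qi_of_qj_mul k (qi_mul_qi k) (qj_mul_qβ k)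

@[simp] lemma qα_mul_qi : qα k * qi k = 0 :=
  mul_eq_zero_of_mul_qj_of_qi_mul k (qα_mul_qj k) (qi_mul_qi k)

@[simp] lemma qα_mul_qα : qα k * qα k = 0 :=
  mul_eq_zero_of_mul_qj_of_qi_mul k (qα_mul_qj k) (qi_mul_qα k)

@[simp] lemma qα_mul_qγ : qα k * qγ k = 0 :=
  mul_eq_zero_of_mul_qj_of_qi_mul k (qα_mul_qj k) (qi_mul_qγ k)

@[simp] lemma qα_mul_qδ : qα k * qδ k = 0 :=
  mul_eq_zero_of_mul_qj_of_qi_mul k (qα_mul_qj k) (qi_mul_qδ k)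

@[simp] lemma qβ_mul_qj : qβ k * qj k = 0 :=
  mul_eq_zero_of_mul_qi_of_qj_mul k (qβ_mul_qi k) (qj_mul_qj k)

@[simp] lemma qβ_mul_qβ : qβ k * qβ k = 0 :=
  mul_eq_zero_of_mul_qi_of_qj_mul k (qβ_mul_qi k) (qj_mul_qβ k)

@[simp] lemma qγ_mul_qj : qγ k * qj k = 0 :=
  mul_eq_zero_of_mul_qi_of_qj_mul k (qγ_mul_qi k) (qj_mul_qj k)

@[simp] lemma qγ_mul_qβ : qγ k * qβ k = 0 :=
  mul_eq_zero_of_mul_qi_of_qj_mul k (qγ_mul_qi k) (qj_mul_qβ k)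

@[simp] lemma qδ_mul_qj : qδ k * qj k = 0 :=
  mul_eq_zero_of_mul_qi_of_qj_mul k (qδ_mul_qi k) (qj_mul_qj k)

@[simp] lemma qδ_mul_qβ : qδ k * qβ k = 0 :=
  mul_eq_zero_of_mul_qi_of_qj_mul k (qδ_mul_qi k) (qj_mul_qβ k)

-- Simp works on left-associated products, so it also needs the products of the
-- monomials `αβ`, `βα`, `γγ` with a generator.
@[simp] lemma qα_mul_qβ_mul_qi : qα k * qβ k * qi k = qα k * qβ k := by
  rw [mul_assoc, qβ_mul_qi]

@[simp] lemma qα_mul_qβ_mul_qj : qα k * qβ k * qj k = 0 := by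
  rw [mul_assoc, qβ_mul_qj, mul_zero]

@[simp] lemma qα_mul_qβ_mul_qα : qα k * qβ k * qα k = 0 := by
  rw [← qδ_mul_qδ, mul_assoc, qδ_mul_qα, mul_zero]

@[simp] lemma qα_mul_qβ_mul_qβ : qα k * qβ k * qβ k = 0 := by
  rw [mul_assoc, qβ_mul_qβ, mul_zero]

@[simp] lemma qα_mul_qβ_mul_qγ : qα k * qβ k * qγ k = 0 := by
  rw [← qδ_mul_qδ, mul_assoc, qδ_mul_qγ, mul_zero]

@[simp] lemma qα_mul_qβ_mul_qδ : qα k * qβ k * qδ k = 0 := by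
  rw [← qδ_mul_qδ, mul_assoc, qδ_mul_qδ, ← mul_assoc, qδ_mul_qα, zero_mul]

@[simp] lemma qβ_mul_qα_mul_qi : qβ k * qα k * qi k = 0 := by
  rw [mul_assoc, qα_mul_qi, mul_zero]

@[simp] lemma qβ_mul_qα_mul_qj : qβ k * qα k * qj k = qβ k * qα k := by
  rw [mul_assoc, qα_mul_qj]

@[simp] lemma qβ_mul_qα_mul_qα : qβ k * qα k * qα k = 0 := by
  rw [mul_assoc, qα_mul_qα, mul_zero]

@[simp] lemma qβ_mul_qα_mul_qβ : qβ k * qα k * qβ k = 0 := by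
  rw [mul_assoc, ← qδ_mul_qδ, ← mul_assoc, qβ_mul_qδ, zero_mul]

@[simp] lemma qβ_mul_qα_mul_qγ : qβ k * qα k * qγ k = 0 := by
  rw [mul_assoc, qα_mul_qγ, mul_zero]

@[simp] lemma qβ_mul_qα_mul_qδ : qβ k * qα k * qδ k = 0 := by
  rw [mul_assoc, qα_mul_qδ, mul_zero]

@[simp] lemma qγ_mul_qγ_mul_qi : qγ k * qγ k * qi k = qγ k * qγ k := by
  rw [mul_assoc, qγ_mul_qi]

@[simp] lemma qγ_mul_qγ_mul_qj : qγ k * qγ k * qj k = 0 := by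
  rw [mul_assoc, qγ_mul_qj, mul_zero]

@[simp] lemma qγ_mul_qγ_mul_qα : qγ k * qγ k * qα k = 0 := by
  rw [mul_assoc, qγ_mul_qα, mul_zero]

@[simp] lemma qγ_mul_qγ_mul_qβ : qγ k * qγ k * qβ k = 0 := by
  rw [mul_assoc, qγ_mul_qβ, mul_zero]

@[simp] lemma qγ_mul_qγ_mul_qδ : qγ k * qγ k * qδ k = 0 := by
  rw [mul_assoc, qγ_mul_qδ, mul_zero]

/-- The standard basis in the normal form of the simp lemmas above: `γ² = γγ`, `δ² = αβ`. -/
def qmonomials : Set (QuiverAlg k) :=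
  {qi k, qj k, qα k, qβ k, qβ k * qα k, qγ k, qγ k * qγ k, qδ k, qα k * qβ k}

lemma mul_mem_qmonomials_or_eq_zero {x y : QuiverAlg k} (hx : x ∈ qmonomials k)
    (hy : y ∈ qmonomials k) : x * y ∈ qmonomials k ∨ x * y = 0 := by
  simp only [qmonomials, Set.mem_insert_iff, Set.mem_singleton_iff] at hx hy
  rcases hx with rfl | rfl | rfl | rfl | rfl | rfl | rfl | rfl | rfl <;>
    rcases hy with rfl | rfl | rfl | rfl | rfl | rfl | rfl | rfl | rfl <;>
    simp [qmonomials, ← mul_assoc]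

lemma RingQuot.adjoin_range_mkAlgHom_ι {R X : Type*} [CommSemiring R]
    (r : FreeAlgebra R X → FreeAlgebra R X → Prop) :
    Algebra.adjoin R (Set.range fun x ↦ RingQuot.mkAlgHom R r (ι R x)) = ⊤ := by
  rw [Set.range_comp' (RingQuot.mkAlgHom R r) (ι R), Algebra.adjoin_image,
    FreeAlgebra.adjoin_range_ι, Algebra.map_top, AlgHom.range_eq_top]
  exact RingQuot.mkAlgHom_surjective R r

lemma span_qmonomials_eq_top : Submodule.span k (qmonomials k) = ⊤ := by
  set M := Submodule.span k (qmonomials k)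
  have one_mem : (1 : QuiverAlg k) ∈ M := by
    rw [← qi_add_qj]
    exact add_mem (Submodule.subset_span (by simp [qmonomials]))
      (Submodule.subset_span (by simp [qmonomials]))
  have mul_le : M * M ≤ M := by
    rw [Submodule.span_mul_span, Submodule.span_le]
    rintro _ ⟨a, ha, b, hb, rfl⟩
    rcases mul_mem_qmonomials_or_eq_zero k ha hb with h | h
    · exact Submodule.subset_span h
    · simp only [h, SetLike.mem_coe, zero_mem]
  have mul_mem (x y : QuiverAlg k) (hx : x ∈ M) (hy : y ∈ M) : x * y ∈ M :=
    mul_le (Submodule.mul_mem_mul hx hy)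
  have hM : M.toSubalgebra one_mem mul_mem = ⊤ := by
    rw [eq_top_iff, ← RingQuot.adjoin_range_mkAlgHom_ι, Algebra.adjoin_le_iff]
    rintro _ ⟨n, rfl⟩
    fin_cases n <;> exact Submodule.subset_span (by simp [qmonomials, qi, qj, qα, qβ, qγ, qδ])
  simpa using congrArg Subalgebra.toSubmodule hM

noncomputable def qtraceLinearMap : QuiverAlg k →ₗ[k] QuiverAlg k where
  toFun := qtrace k
  map_add' u v := by simp [qtrace, mul_add, add_mul, Finset.sum_add_distrib]
  map_smul' c u := by simp [qtrace, Finset.smul_sum]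

lemma qtrace_eq (u : QuiverAlg k) :
    qtrace k u =
      qi k * u * (qα k * qβ k) + qj k * u * (qβ k * qα k) + qα k * u * qβ k +
        qβ k * u * qα k + qβ k * qα k * u * qj k + qγ k * u * (qγ k * qγ k) +
        qγ k * qγ k * u * qγ k + qδ k * u * qδ k + qα k * qβ k * u * qi k := by
  simp [qtrace, Fin.sum_univ_succ, qbasisVec, qdualVec, sq, add_assoc]

lemma qtrace_qi [CharP k 3] : qtrace k (qi k) = -(qα k * qβ k - qβ k * qα k) := by
  have h3 : (3 : k) = 0 := CharP.cast_eq_zero k 3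
  rw [qtrace_eq]
  simp [← mul_assoc]
  linear_combination (norm := module) (2 : k) • h3 • (qα k * qβ k)

lemma qtrace_qj [CharP k 3] : qtrace k (qj k) = qα k * qβ k - qβ k * qα k := by
  have h3 : (3 : k) = 0 := CharP.cast_eq_zero k 3
  rw [qtrace_eq]
  simp [← mul_assoc]
  linear_combination (norm := module) h3 • (qβ k * qα k)

lemma qtrace_radical_monomial_eq_zero {x : QuiverAlg k}
    (hx : x ∈ ({qα k, qβ k, qβ k * qα k, qγ k, qγ k * qγ k, qδ k, qα k * qβ k} : Set _)) :
    qtrace k x = 0 := by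
  simp only [Set.mem_insert_iff, Set.mem_singleton_iff] at hx
  rcases hx with rfl | rfl | rfl | rfl | rfl | rfl | rfl <;> simp [qtrace_eq, ← mul_assoc]

lemma qtrace_mem_span_of_mem_qmonomials [CharP k 3] {x : QuiverAlg k} (hx : x ∈ qmonomials k) :
    qtrace k x ∈ Submodule.span k {qα k * qβ k - qβ k * qα k} := by
  rcases hx with rfl | rfl | hx
  · exact qtrace_qi k ▸ neg_mem (Submodule.mem_span_singleton_self _)
  · exact qtrace_qj k ▸ Submodule.mem_span_singleton_self _
  · exact qtrace_radical_monomial_eq_zero k hx ▸ zero_mem _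

-- `αβ` acts as `0` and `βα` as the matrix unit `E₂₃`.
noncomputable def quiverRep : QuiverAlg k →ₐ[k] Matrix (Fin 3) (Fin 3) k :=
  RingQuot.liftAlgHom k ⟨FreeAlgebra.lift k ![!![1, 0, 0; 0, 0, 0; 0, 0, 0],
    !![0, 0, 0; 0, 1, 0; 0, 0, 1], !![0, 0, 1; 0, 0, 0; 0, 0, 0], !![0, 0, 0; 1, 0, 0; 0, 0, 0],
    0, 0], by
    rintro _ _ ⟨⟩ <;>
      simp only [map_mul, map_add, map_zero, map_one, FreeAlgebra.lift_ι_apply, Matrix.cons_val,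
        zero_mul, mul_zero] <;>
      ext i j <;> fin_cases i <;> fin_cases j <;> simp [Matrix.mul_apply, Fin.sum_univ_succ]⟩

lemma qα_mul_qβ_sub_qβ_mul_qα_ne_zero : qα k * qβ k - qβ k * qα k ≠ 0 := by
  intro h
  have h12 := congrArg (fun x ↦ quiverRep k x 1 2) h
  simp [quiverRep, qα, qβ] at h12

lemma range_qtraceLinearMap_le [CharP k 3] :
    LinearMap.range (qtraceLinearMap k) ≤ Submodule.span k {qα k * qβ k - qβ k * qα k} := by
  rw [LinearMap.range_eq_map, ← span_qmonomials_eq_top, Submodule.map_span_le]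
  exact fun x hx ↦ qtrace_mem_span_of_mem_qmonomials k hx

/-- In characteristic `3`, the projective ideal `Z^pr(A) = Tr₁^A(A)` is one-dimensional
with basis `{αβ − βα}`. -/
theorem stmt_10 [CharP k 3] :
    Submodule.span k {x : QuiverAlg k | ∃ u : QuiverAlg k, x = qtrace k u} =
      Submodule.span k {qα k * qβ k - qβ k * qα k} ∧
    qα k * qβ k - qβ k * qα k ≠ 0 := by
  refine ⟨le_antisymm ?_ ?_, qα_mul_qβ_sub_qβ_mul_qα_ne_zero k⟩
  · rw [Submodule.span_le]
    rintro _ ⟨u, rfl⟩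
    exact range_qtraceLinearMap_le k ⟨u, rfl⟩
  · rw [Submodule.span_singleton_le_iff_mem]
    exact Submodule.subset_span ⟨qj k, (qtrace_qj k).symm⟩
end

section
/- Let k have characteristic 3, P = C₃ × C₃ with generators r, s, and H = P ⋊ ⟨t⟩ where t has order 2 and acts on P by inversion. Then the relative trace Tr₁^H(c) = Σ_{g∈H} g c g⁻¹ vanishes on kP, and for a ∈ P one has Tr₁^H(at) = 2·Σ_{x∈P} xt. Consequently the projective ideal Z^pr(kH) = Tr₁^H(kH) is one-dimensional with basis {Σ_{x∈P} xt}. -/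
/-! The Frobenius group `H = P ⋊ C₂`, where `P = C₃ × C₃` and the nontrivial element `t`
of `C₂` acts on `P` by inversion. -/

/-- `P = C₃ × C₃`, written multiplicatively. -/
abbrev Pgrp := Multiplicative (ZMod 3 × ZMod 3)

lemma c2_cases (a : Multiplicative (ZMod 2)) :
    a = 1 ∨ a = Multiplicative.ofAdd 1 := by revert a; decide

lemma invAut_sq : (MulEquiv.inv Pgrp) * (MulEquiv.inv Pgrp) = (1 : MulAut Pgrp) := by
  ext x
  simp
  all_goals simp [MulAut.mul_apply]

/-- The action of `C₂` on `P` by inversion. -/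
def invAction : Multiplicative (ZMod 2) →* MulAut Pgrp where
  toFun a := if a = 1 then 1 else MulEquiv.inv Pgrp
  map_one' := if_pos rfl
  map_mul' a b := by
    have h2 : (Multiplicative.ofAdd (1 : ZMod 2)) ≠ 1 := by decide
    have h1 : (Multiplicative.ofAdd (1 : ZMod 2)) * Multiplicative.ofAdd 1 = 1 := by decide
    rcases c2_cases a with ha | ha <;> rcases c2_cases b with hb | hb <;>
        subst ha <;> subst hb <;>
      simp only [one_mul, mul_one, h1, if_pos rfl, if_neg h2]
    all_goals first | rfl | exact invAut_sq.symm

/-- The Frobenius group `H = P ⋊ C₂` of order 18. -/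
abbrev Hgrp := SemidirectProduct Pgrp (Multiplicative (ZMod 2)) invAction

noncomputable instance : Fintype Hgrp :=
  Fintype.ofEquiv (Pgrp × Multiplicative (ZMod 2))
    { toFun := fun p => ⟨p.1, p.2⟩
      invFun := fun h => (h.left, h.right)
      left_inv := fun _ => rfl
      right_inv := fun _ => rfl }

/-- The nontrivial element `t` of the complement `C₂` in `H`, acting by inversion. -/
def tH : Hgrp := SemidirectProduct.inr (Multiplicative.ofAdd 1)

/-- A generator `r` of the first factor `C₃` of `P`. -/
def rP : Pgrp := Multiplicative.ofAdd ((1 : ZMod 3), (0 : ZMod 3))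

/-- A generator `s` of the second factor `C₃` of `P`. -/
def sP : Pgrp := Multiplicative.ofAdd ((0 : ZMod 3), (1 : ZMod 3))

variable (k : Type*) [Field k]

/-- The embedding `kP → kH` of group algebras induced by `P ≤ H`. -/
noncomputable def embedP : MonoidAlgebra k Pgrp →ₐ[k] MonoidAlgebra k Hgrp :=
  MonoidAlgebra.lift k _ Pgrp ((MonoidAlgebra.of k Hgrp).comp SemidirectProduct.inl)

/-- The relative trace map `Tr₁^H(c) = Σ_{g ∈ H} g c g⁻¹` on the group algebra `kH`. -/
noncomputable def trH (c : MonoidAlgebra k Hgrp) : MonoidAlgebra k Hgrp :=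
  ∑ g : Hgrp, MonoidAlgebra.of k Hgrp g * c * MonoidAlgebra.of k Hgrp g⁻¹

/-- The element `Σ_{x ∈ P} xt` of `kH`. -/
noncomputable def sigmaPt : MonoidAlgebra k Hgrp :=
  ∑ x : Pgrp, MonoidAlgebra.of k Hgrp (SemidirectProduct.inl x * tH)

/-! Conjugating `a ∈ P` by `(x, b) ∈ H` gives `a^{±1}`, so the eighteen terms of `Tr₁^H(a)` fall into
two blocks of nine equal terms and cancel in characteristic `3`. Conjugating `at` by `(x, b)` gives
`x⁻¹ a^{±1} t`, which runs once through the coset `Pt` as `x` runs through `P`; hence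
`Tr₁^H(at) = 2 · Σ_{x∈P} xt`. As `2` is a unit, the image of the trace is the line spanned by
`Σ_{x∈P} xt`, which is nonzero because its coefficient at `t` is `1`. -/

open SemidirectProduct MonoidAlgebra

theorem SemidirectProduct.conj_inl {N G : Type*} [CommGroup N] [Group G] {φ : G →* MulAut N}
    (g : N ⋊[φ] G) (n : N) : g * inl n * g⁻¹ = inl (φ g.right n) := by
  ext <;> simp [mul_comm]

lemma conj_inl_mul_tH (x : Pgrp) (b : Multiplicative (ZMod 2)) (a : Pgrp) :
    (⟨x, b⟩ : Hgrp) * (inl a * tH) * (⟨x, b⟩ : Hgrp)⁻¹ = inl (x⁻¹ * invAction b a) * tH := by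
  revert x b a; decide

lemma sum_Hgrp {M : Type*} [AddCommMonoid M] (f : Hgrp → M) :
    ∑ g, f g = ∑ b, ∑ x : Pgrp, f ⟨x, b⟩ := by
  rw [← equivProd.symm.sum_comp, Fintype.sum_prod_type_right]
  rfl

noncomputable def trHLinear : MonoidAlgebra k Hgrp →ₗ[k] MonoidAlgebra k Hgrp where
  toFun := trH k
  map_add' x y := by simp only [trH, mul_add, add_mul, Finset.sum_add_distrib]
  map_smul' a x := by
    simp only [trH, mul_smul_comm, smul_mul_assoc, Finset.smul_sum, RingHom.id_apply]

lemma trHLinear_apply (c : MonoidAlgebra k Hgrp) : trHLinear k c = trH k c := rfl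

lemma trH_single (h : Hgrp) (v : k) :
    trH k (single h v) = ∑ g : Hgrp, single (g * h * g⁻¹) v := by
  simp only [trH, of_apply, single_mul_single, one_mul, mul_one]

lemma trH_single_inl [CharP k 3] (a : Pgrp) (v : k) : trH k (single (inl a) v) = 0 := by
  have hcard : (Fintype.card Pgrp : k) = 0 := (CharP.cast_eq_zero_iff k 3 _).mpr (by decide)
  simp only [trH_single, conj_inl, sum_Hgrp, Finset.sum_const, Finset.card_univ,
    ← Nat.cast_smul_eq_nsmul k, hcard, zero_smul, smul_zero]

lemma sum_single_inl_mul_tH (v : k) :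
    ∑ y : Pgrp, single (inl y * tH) v = v • sigmaPt k := by
  simp only [sigmaPt, Finset.smul_sum, smul_of]

lemma trH_single_inl_mul_tH (a : Pgrp) (v : k) :
    trH k (single (inl a * tH) v) = (2 * v) • sigmaPt k := by
  have hfiber (c : Pgrp) : ∑ x : Pgrp, single (inl (x⁻¹ * c) * tH) v = v • sigmaPt k := by
    rw [← sum_single_inl_mul_tH]
    exact Fintype.sum_equiv ((Equiv.inv Pgrp).trans (Equiv.mulRight c)) _ _ fun _ => rfl
  simp only [trH_single, sum_Hgrp, conj_inl_mul_tH, hfiber, Finset.sum_const, Finset.card_univ]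
  rw [mul_smul, ← Nat.cast_smul_eq_nsmul k]
  rfl

lemma embedP_single (a : Pgrp) (v : k) : embedP k (single a v) = single (inl a) v := by
  simp only [embedP, lift_single, MonoidHom.comp_apply, smul_of]

lemma trH_single_mem_span [CharP k 3] (h : Hgrp) (v : k) :
    trH k (single h v) ∈ Submodule.span k {sigmaPt k} := by
  obtain ⟨a, b⟩ := h
  rcases c2_cases b with rfl | rfl
  · rw [show (⟨a, 1⟩ : Hgrp) = inl a from rfl, trH_single_inl]
    exact zero_mem _
  · rw [mk_eq_inl_mul_inr, ← tH, trH_single_inl_mul_tH]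
    exact Submodule.smul_mem _ _ (Submodule.mem_span_singleton_self _)

lemma range_trHLinear [CharP k 3] :
    LinearMap.range (trHLinear k) = Submodule.span k {sigmaPt k} := by
  refine le_antisymm ?_ ?_
  · rintro _ ⟨c, rfl⟩
    induction c using MonoidAlgebra.induction_linear with
    | zero => simp
    | add x y hx hy => rw [map_add]; exact add_mem hx hy
    | single h v => exact trH_single_mem_span k h v
  · rw [Submodule.span_le, Set.singleton_subset_iff]
    have h4 : (2 * 2 : k) = 1 := by
      linear_combination (CharP.cast_eq_zero k 3 : ((3 : ℕ) : k) = 0)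
    refine ⟨single (inl 1 * tH) 2, ?_⟩
    rw [trHLinear_apply, trH_single_inl_mul_tH, h4, one_smul]

lemma sigmaPt_ne_zero : sigmaPt k ≠ 0 := by
  have hcoeff : (sigmaPt k).coeff tH = 1 := by
    simp [sigmaPt, of_apply, coeff_sum, Finsupp.single_apply, map_eq_one_iff _ inl_injective]
  intro h
  simp [h] at hcoeff

/-- Let `k` have characteristic `3`. The relative trace `Tr₁^H` vanishes on `kP`; for
`a ∈ P` one has `Tr₁^H(at) = 2·Σ_{x∈P} xt`; and consequently the projective ideal
`Z^pr(kH) = Tr₁^H(kH)` is one-dimensional with basis `{Σ_{x∈P} xt}`. -/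
theorem stmt_13 [CharP k 3] :
    (∀ c : MonoidAlgebra k Pgrp, trH k (embedP k c) = 0) ∧
    (∀ a : Pgrp,
      trH k (MonoidAlgebra.of k Hgrp (SemidirectProduct.inl a * tH)) =
        (2 : k) • sigmaPt k) ∧
    (Submodule.span k {z : MonoidAlgebra k Hgrp | ∃ c, z = trH k c} =
        Submodule.span k {sigmaPt k} ∧
      sigmaPt k ≠ 0) := by
  refine ⟨fun c => ?_, fun a => ?_, ?_, sigmaPt_ne_zero k⟩
  · rw [← trHLinear_apply]
    induction c using MonoidAlgebra.induction_linear with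
    | zero => simp
    | add x y hx hy => simp [hx, hy]
    | single a v => rw [embedP_single, trHLinear_apply, trH_single_inl]
  · rw [of_apply, trH_single_inl_mul_tH, mul_one]
  · have hset : {z | ∃ c, z = trH k c} = (LinearMap.range (trHLinear k) : Set _) := by
      ext z; exact exists_congr fun _ => eq_comm
    rw [hset, Submodule.span_eq, range_trHLinear]
end

section
/- Let P = C₃ × C₃ and let E be a subgroup of Aut(P) ≅ GL₂(𝔽₃) of order coprime to 3. If E has exactly 5 orbits on P, then E is cyclic of order 2 and its nontrivial element acts on P by inversion (i.e., fixed-point freely). -/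
/-!
Burnside's lemma gives `∑_{g ≠ 0} |Fix g| + 9 = 5 |E|`. A nontrivial automorphism fixes a
proper subgroup of `P`, so `1 ≤ |Fix g| ≤ 3` for `g ≠ 0`, whence `|E| - 1 ≤ 5 |E| - 9 ≤ 3 (|E| - 1)`,
i.e. `|E| ∈ {2, 3}`; coprimality rules out `3`. For `|E| = 2` the sum has one term, so the
nontrivial element `e` fixes only `0`; since `e` is an involution, `e g + g` is fixed, hence `0`.
-/

open AddAction

theorem AddSubgroup.card_le_of_ne_top_of_card_eq_prime_pow {G : Type*} [AddGroup G]
    {p k : ℕ} (hp : p.Prime) (hG : Nat.card G = p ^ (k + 1)) {H : AddSubgroup G} (hH : H ≠ ⊤) :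
    Nat.card H ≤ p ^ k := by
  have : Finite G := Nat.finite_of_card_ne_zero (by simp [hG, hp.ne_zero])
  obtain ⟨m, hm, hHm⟩ := (Nat.dvd_prime_pow hp).1 (hG ▸ H.card_addSubgroup_dvd_card)
  have hmk : m ≠ k + 1 := by
    rintro rfl
    exact hH (H.eq_top_of_card_eq (hHm.trans hG.symm))
  rw [hHm]
  exact Nat.pow_le_pow_right hp.pos (by omega)

theorem AddAction.sum_card_fixedBy_erase_zero_add_card (G X : Type*) [AddGroup G]
    [AddAction G X] [Fintype G] [DecidableEq G] [Finite X] :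
    ∑ g ∈ Finset.univ.erase (0 : G), Nat.card (fixedBy X g) + Nat.card X =
      Nat.card (Quotient (orbitRel G X)) * Nat.card G := by
  have : Fintype X := Fintype.ofFinite X
  have : Fintype (Quotient (orbitRel G X)) := Fintype.ofFinite _
  have (g : G) : Fintype (fixedBy X g) := Fintype.ofFinite _
  have hfix0 : fixedBy X (0 : G) = Set.univ := Set.eq_univ_of_forall (zero_vadd G)
  rw [← Nat.card_univ, ← hfix0, Finset.sum_erase_add _ _ (Finset.mem_univ 0)]
  simpa [Nat.card_eq_fintype_card] using sum_card_fixedBy_eq_card_orbits_mul_card_addGroup G X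

namespace AddAut

variable {A : Type*}

theorem one_le_card_fixedBy [AddMonoid A] [Finite A] (e : AddAut A) :
    1 ≤ Nat.card (fixedBy A e) :=
  Nat.one_le_iff_ne_zero.2 (Nat.card_ne_zero.2 ⟨⟨0, map_zero e⟩, inferInstance⟩)

theorem eq_zero_of_mem_fixedBy [AddMonoid A] [Finite A] {e : AddAut A}
    (he : Nat.card (fixedBy A e) ≤ 1) {x : A} (hx : x ∈ fixedBy A e) : x = 0 :=
  have := Finite.card_le_one_iff_subsingleton.1 he
  congrArg Subtype.val (Subsingleton.elim (α := fixedBy A e) ⟨x, hx⟩ ⟨0, map_zero e⟩)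

theorem card_fixedBy_le_of_card_eq_prime_pow [AddGroup A] {p k : ℕ} (hp : p.Prime)
    (hA : Nat.card A = p ^ (k + 1)) {e : AddAut A} (he : e ≠ 0) :
    Nat.card (fixedBy A e) ≤ p ^ k :=
  AddSubgroup.card_le_of_ne_top_of_card_eq_prime_pow (H := (e : A →+ A).eqLocus (.id A)) hp hA
    fun h => he <| AddEquiv.ext fun x =>
      (h ▸ AddSubgroup.mem_top x : x ∈ (e : A →+ A).eqLocus (.id A))

theorem apply_eq_neg_of_add_self_eq_zero [AddCommGroup A] {e : AddAut A} (he : e + e = 0)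
    (hfix : ∀ x, e x = x → x = 0) (g : A) : e g = -g := by
  have hee : e (e g) = g := by simpa using congrArg (· g) he
  exact eq_neg_of_add_eq_zero_left (hfix _ (by rw [map_add, hee, add_comm]))

end AddAut

/-- Let `P = C₃ × C₃` (written additively as `ZMod 3 × ZMod 3`) and let `E` be a subgroup
of `Aut(P)` of order coprime to `3`. If `E` has exactly `5` orbits on `P`, then `E` has
order `2` and its nontrivial element acts on `P` by inversion. -/
theorem stmt_18 (E : AddSubgroup (AddAut (ZMod 3 × ZMod 3)))
    (hcop : Nat.Coprime (Nat.card E) 3)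
    (horb : Nat.card (Quotient (AddAction.orbitRel E (ZMod 3 × ZMod 3))) = 5) :
    Nat.card E = 2 ∧
      ∀ e : E, (e : AddAut (ZMod 3 × ZMod 3)) ≠ 0 →
        ∀ g : ZMod 3 × ZMod 3, (e : AddAut (ZMod 3 × ZMod 3)) g = -g := by
  classical
  set X := ZMod 3 × ZMod 3
  have : Fintype E := Fintype.ofFinite E
  set S := ∑ g ∈ Finset.univ.erase (0 : E), Nat.card (fixedBy X g)
  have hX : Nat.card X = 3 ^ (1 + 1) := by simp [X]
  have hburnside := sum_card_fixedBy_erase_zero_add_card E X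
  rw [hX, horb] at hburnside
  have hlow : (Finset.univ.erase (0 : E)).card • 1 ≤ S :=
    Finset.card_nsmul_le_sum _ _ 1 fun g _ => AddAut.one_le_card_fixedBy (g : AddAut X)
  have hup : S ≤ (Finset.univ.erase (0 : E)).card • 3 :=
    Finset.sum_le_card_nsmul _ _ 3 fun g hg =>
      AddAut.card_fixedBy_le_of_card_eq_prime_pow Nat.prime_three hX
        fun h => Finset.ne_of_mem_erase hg (Subtype.ext h)
  rw [Finset.card_erase_of_mem (Finset.mem_univ _), Finset.card_univ, ← Nat.card_eq_fintype_card,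
    smul_eq_mul] at hlow hup
  have hn3 : Nat.card E ≠ 3 := fun h => by rw [h] at hcop; norm_num at hcop
  have hn : Nat.card E = 2 := by have := Nat.card_pos (α := E); omega
  refine ⟨hn, fun e he => AddAut.apply_eq_neg_of_add_self_eq_zero ?_ fun x hx => ?_⟩
  · have hee : e + e = 0 := by rw [← two_nsmul, ← hn]; exact card_nsmul_eq_zero'
    exact congrArg Subtype.val hee
  · have he0 : e ∈ Finset.univ.erase 0 :=
      Finset.mem_erase.2 ⟨fun h => he (by simp [h]), Finset.mem_univ e⟩
    refine AddAut.eq_zero_of_mem_fixedBy (e := (e : AddAut X)) ?_ hx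
    exact (Finset.single_le_sum (fun _ _ => Nat.zero_le _) he0).trans (show S ≤ 1 by omega)
end
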